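/- arXiv:1904.00218 — 4 statements merged into one kernel-verified Lean document; each statement's English description precedes it below -/
import Mathlib

section
/- Let B be a real symmetric N×N matrix with smallest eigenvalue λ_min, let γ : ℝ → ℝ be continuous and nonnegative, let T₀ ∈ ℝ, and let F : ℝ × ℝ^N → ℝ^N satisfy a Lipschitz condition with respect to the second variable with constant 𝓛 > 0. Let x : ℝ → ℝ^N and x₀ : ℝ → ℝ be such that ε(t) := x(t) − x₀(t)·𝟙 is C¹ on [T₀,∞) and satisfies ε′(t) = F(t, x(t)) − F(t, x₀(t)·𝟙) − γ(t)·(B·ε(t)) for all t ≥ T₀. Then for all t ≥ T₀, ‖ε(t)‖ ≤ ‖ε(T₀)‖·exp(𝓛·(t−T₀) − λ_min·∫_{T₀}^{t} γ(s) ds). -/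
/-!
The quantity `‖ε t‖² · exp (-2 ∫_{T₀}^t (𝓛 - λ_min γ))` is nonincreasing: differentiating `‖ε‖²`
gives `2 ⟪ε, ε'⟫`, the Lipschitz bound controls the `F`-part of `⟪ε, ε'⟫` by `𝓛 ‖ε‖²`, and the
Rayleigh bound `⟪ε, B ε⟫ ≥ λ_min ‖ε‖²` together with `γ ≥ 0` controls the damping part by
`-λ_min γ ‖ε‖²`.
-/

open Real Set Matrix
open scoped MatrixOrder RealInnerProductSpace

theorem Matrix.IsHermitian.mul_norm_sq_le_inner_toEuclideanCLM {n : Type*} [Fintype n]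
    [DecidableEq n] {B : Matrix n n ℝ} (hB : B.IsHermitian) {c : ℝ}
    (hc : ∀ i, c ≤ hB.eigenvalues i) (v : EuclideanSpace ℝ n) :
    c * ‖v‖ ^ 2 ≤ ⟪v, toEuclideanCLM (𝕜 := ℝ) B v⟫ := by
  have hle : algebraMap ℝ _ c ≤ B := by
    rw [algebraMap_le_iff_le_spectrum (a := B) hB.isSelfAdjoint,
      hB.spectrum_real_eq_range_eigenvalues]
    rintro _ ⟨i, rfl⟩
    exact hc i
  have hpsd := (Matrix.le_iff.1 hle).dotProduct_mulVec_nonneg v.ofLp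
  simp only [sub_mulVec, Algebra.algebraMap_eq_smul_one, smul_mulVec, one_mulVec, dotProduct_sub,
    dotProduct_smul, star_trivial, smul_eq_mul] at hpsd
  rw [← real_inner_self_eq_norm_sq, inner_toEuclideanCLM, EuclideanSpace.inner_eq_star_dotProduct,
    star_trivial]
  linarith

theorem norm_le_mul_exp_integral_of_inner_deriv_le {E : Type*} [NormedAddCommGroup E]
    [InnerProductSpace ℝ E] {f f' : ℝ → E} {a : ℝ → ℝ} {t₀ : ℝ} (ha : Continuous a)
    (hf : ∀ t, t₀ ≤ t → HasDerivAt f (f' t) t)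
    (hbound : ∀ t, t₀ ≤ t → ⟪f t, f' t⟫ ≤ a t * ‖f t‖ ^ 2) :
    ∀ t, t₀ ≤ t → ‖f t‖ ≤ ‖f t₀‖ * exp (∫ s in t₀..t, a s) := by
  set A : ℝ → ℝ := fun t ↦ ∫ s in t₀..t, a s
  have hA : ∀ t, HasDerivAt A (a t) t := fun t ↦ (ha.integral_hasStrictDerivAt t₀ t).hasDerivAt
  have hw : ∀ t, t₀ ≤ t → HasDerivAt (fun t ↦ ‖f t‖ ^ 2 * exp (-(2 * A t)))
      (2 * (⟪f t, f' t⟫ - a t * ‖f t‖ ^ 2) * exp (-(2 * A t))) t := by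
    intro t ht
    have hexp : HasDerivAt (fun t ↦ exp (-(2 * A t))) (exp (-(2 * A t)) * -(2 * a t)) t :=
      ((hA t).const_mul 2).neg.exp
    exact ((hf t ht).norm_sq.mul hexp).congr_deriv (by ring)
  have hanti : AntitoneOn (fun t ↦ ‖f t‖ ^ 2 * exp (-(2 * A t))) (Ici t₀) := by
    refine antitoneOn_of_hasDerivWithinAt_nonpos (convex_Ici t₀)
      (f' := fun t ↦ 2 * (⟪f t, f' t⟫ - a t * ‖f t‖ ^ 2) * exp (-(2 * A t)))
      (fun t ht ↦ (hw t ht).continuousAt.continuousWithinAt) (fun t ht ↦ ?_) (fun t ht ↦ ?_)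
    all_goals rw [interior_Ici] at ht
    · exact (hw t ht.le).hasDerivWithinAt
    · exact mul_nonpos_of_nonpos_of_nonneg (by linarith [hbound t ht.le]) (exp_pos _).le
  intro t ht
  have hdecay : ‖f t‖ ^ 2 * exp (-(2 * A t)) ≤ ‖f t₀‖ ^ 2 := by
    simpa [A] using hanti self_mem_Ici ht ht
  refine le_of_pow_le_pow_left₀ two_ne_zero (by positivity) ?_
  calc ‖f t‖ ^ 2 = ‖f t‖ ^ 2 * exp (-(2 * A t)) * exp (A t) ^ 2 := by
        rw [← exp_nat_mul, mul_assoc, ← exp_add]; norm_num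
    _ ≤ ‖f t₀‖ ^ 2 * exp (A t) ^ 2 := by gcongr
    _ = (‖f t₀‖ * exp (A t)) ^ 2 := by ring

theorem stmt6_general {N : ℕ} (B : Matrix (Fin N) (Fin N) ℝ)
    (hB : B.IsHermitian) (lmin : ℝ)
    (hmin_le : ∀ i, lmin ≤ hB.eigenvalues i)
    (γ : ℝ → ℝ) (hγ : Continuous γ) (hγ0 : ∀ t, 0 ≤ γ t) (T₀ : ℝ)
    (F : ℝ → EuclideanSpace ℝ (Fin N) → EuclideanSpace ℝ (Fin N))
    (L : ℝ)
    (hFLip : ∀ t x y, ‖F t x - F t y‖ ≤ L * ‖x - y‖)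
    (ones : EuclideanSpace ℝ (Fin N))
    (x : ℝ → EuclideanSpace ℝ (Fin N)) (x₀ : ℝ → ℝ)
    (ε : ℝ → EuclideanSpace ℝ (Fin N)) (hε : ∀ t, ε t = x t - x₀ t • ones)
    (hode : ∀ t, T₀ ≤ t →
      HasDerivAt ε
        (F t (x t) - F t (x₀ t • ones)
          - γ t • (Matrix.toEuclideanCLM (𝕜 := ℝ) (n := Fin N) B (ε t))) t) :
    ∀ t, T₀ ≤ t →
      ‖ε t‖ ≤ ‖ε T₀‖ * Real.exp (L * (t - T₀) - lmin * ∫ s in T₀..t, γ s) := by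
  have hbound : ∀ t, T₀ ≤ t →
      ⟪ε t, F t (x t) - F t (x₀ t • ones) - γ t • toEuclideanCLM (𝕜 := ℝ) B (ε t)⟫
        ≤ (L - lmin * γ t) * ‖ε t‖ ^ 2 := by
    intro t _
    have hF : ⟪ε t, F t (x t) - F t (x₀ t • ones)⟫ ≤ L * ‖ε t‖ ^ 2 := calc
      _ ≤ ‖ε t‖ * ‖F t (x t) - F t (x₀ t • ones)‖ := real_inner_le_norm _ _
      _ ≤ ‖ε t‖ * (L * ‖ε t‖) := by gcongr; simpa [← hε] using hFLip t (x t) (x₀ t • ones)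
      _ = L * ‖ε t‖ ^ 2 := by ring
    have hdamp := mul_le_mul_of_nonneg_left
      (hB.mul_norm_sq_le_inner_toEuclideanCLM hmin_le (ε t)) (hγ0 t)
    rw [inner_sub_right, real_inner_smul_right]
    linarith
  intro t ht
  have h := norm_le_mul_exp_integral_of_inner_deriv_le (by fun_prop) hode hbound t ht
  rwa [intervalIntegral.integral_sub intervalIntegrable_const
    ((hγ.const_mul lmin).intervalIntegrable _ _), intervalIntegral.integral_const, intervalIntegral.integral_const_mul, smul_eq_mul,
    mul_comm (t - T₀)] at h

/-- Let `B` be real symmetric with smallest eigenvalue `λmin`, `γ`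
continuous and nonnegative, and `F` Lipschitz in the second variable with constant
`𝓛 > 0`.  If `ε t := x t - x₀ t • 𝟙` is differentiable on `[T₀, ∞)` with
`ε'(t) = F(t, x t) - F(t, x₀ t • 𝟙) - γ t • (B ⬝ ε t)` there, then for all `t ≥ T₀`,
`‖ε t‖ ≤ ‖ε T₀‖ * exp (𝓛 * (t - T₀) - λmin * ∫_{T₀}^t γ)`. -/
theorem stmt6 {N : ℕ} (hN : 0 < N) (B : Matrix (Fin N) (Fin N) ℝ)
    (hB : B.IsHermitian) (lmin : ℝ)
    (hmin_le : ∀ i, lmin ≤ hB.eigenvalues i)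
    (hmin_mem : ∃ i, hB.eigenvalues i = lmin)
    (γ : ℝ → ℝ) (hγ : Continuous γ) (hγ0 : ∀ t, 0 ≤ γ t) (T₀ : ℝ)
    (F : ℝ → EuclideanSpace ℝ (Fin N) → EuclideanSpace ℝ (Fin N))
    (L : ℝ) (hL : 0 < L)
    (hFLip : ∀ t x y, ‖F t x - F t y‖ ≤ L * ‖x - y‖)
    (ones : EuclideanSpace ℝ (Fin N)) (hones : ∀ i, ones i = 1)
    (x : ℝ → EuclideanSpace ℝ (Fin N)) (x₀ : ℝ → ℝ)
    (ε : ℝ → EuclideanSpace ℝ (Fin N)) (hε : ∀ t, ε t = x t - x₀ t • ones)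
    (hC1 : ContDiffOn ℝ 1 ε (Set.Ici T₀))
    (hode : ∀ t, T₀ ≤ t →
      HasDerivAt ε
        (F t (x t) - F t (x₀ t • ones)
          - γ t • (Matrix.toEuclideanCLM (𝕜 := ℝ) (n := Fin N) B (ε t))) t) :
    ∀ t, T₀ ≤ t →
      ‖ε t‖ ≤ ‖ε T₀‖ * Real.exp (L * (t - T₀) - lmin * ∫ s in T₀..t, γ s) :=
  stmt6_general B hB lmin hmin_le γ hγ hγ0 T₀ F L hFLip ones x x₀ ε hε hode
end

section
/- Let B be a real symmetric N×N matrix with eigenvalues λ_1,…,λ_N, let δ ∈ (0,1) and μ* > 0 be constants, let (μ_n)_{n≥0} and (γ_n)_{n≥0} be real sequences with 0 < μ_n ≤ μ* and δ ≤ μ_n·γ_n·λ_i < 1 for all n and all i = 1,…,N, and let 𝓛 > 0. Let (ε_n)_{n≥0} be a sequence in ℝ^N satisfying ε_{n+1} = (I − μ_n·γ_n·B)·ε_n + μ_n·d_n, where (d_n) is a sequence in ℝ^N with ‖d_n‖ ≤ 𝓛·‖ε_n‖ for all n. Then ‖ε_n‖ ≤ (1 − δ + μ*·𝓛)^n·‖ε_0‖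 for all n; in particular, if 1 − δ + μ*·𝓛 < 1 then ‖ε_n‖ → 0 as n → ∞. -/
/-!
`I - μₙγₙB` is symmetric with eigenvalues `1 - μₙγₙλᵢ ∈ (0, 1 - δ]`, so on `ℝ^N` it contracts by
the factor `1 - δ`; the perturbation `μₙdₙ` adds at most `μ*𝓛‖εₙ‖`. Hence each step multiplies
`‖εₙ‖` by at most `1 - δ + μ*𝓛`.
-/

theorem OrthonormalBasis.norm_apply_le_of_apply_eq_smul {ι 𝕜 E : Type*} [Fintype ι] [RCLike 𝕜]
    [NormedAddCommGroup E] [InnerProductSpace 𝕜 E] (b : OrthonormalBasis ι 𝕜 E)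
    (T : E →ₗ[𝕜] E) (c : ι → 𝕜) (hT : ∀ i, T (b i) = c i • b i) {C : ℝ} (hC : 0 ≤ C)
    (hc : ∀ i, ‖c i‖ ≤ C) (v : E) : ‖T v‖ ≤ C * ‖v‖ := by
  have repr_apply : ∀ i, b.repr (T v) i = c i * b.repr v i := by
    classical
    intro i
    conv_lhs => rw [← b.sum_repr v]
    simp [map_sum, hT, smul_smul, b.repr_self, Pi.single_apply, mul_comm]
  rw [← b.repr.norm_map, ← b.repr.norm_map v, EuclideanSpace.norm_eq, EuclideanSpace.norm_eq,
    ← Real.sqrt_sq hC, ← Real.sqrt_mul (sq_nonneg C), Finset.mul_sum]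
  gcongr with i
  rw [repr_apply, norm_mul, mul_pow]
  gcongr
  exact hc i

namespace Matrix.IsHermitian

variable {n 𝕜 : Type*} [Fintype n] [DecidableEq n] [RCLike 𝕜] {A : Matrix n n 𝕜}

theorem toEuclideanCLM_eigenvectorBasis (hA : A.IsHermitian) (j : n) :
    toEuclideanCLM (𝕜 := 𝕜) A (hA.eigenvectorBasis j) =
      (hA.eigenvalues j : 𝕜) • hA.eigenvectorBasis j := by
  apply (WithLp.equiv 2 _).injective
  simp [ofLp_toEuclideanCLM, hA.mulVec_eigenvectorBasis]

theorem norm_toEuclideanCLM_one_sub_smul_le (hA : A.IsHermitian) (s : ℝ) {C : ℝ} (hC : 0 ≤ C)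
    (h : ∀ i, |1 - s * hA.eigenvalues i| ≤ C) (v : EuclideanSpace 𝕜 n) :
    ‖toEuclideanCLM (𝕜 := 𝕜) (1 - s • A) v‖ ≤ C * ‖v‖ := by
  refine hA.eigenvectorBasis.norm_apply_le_of_apply_eq_smul
    (toEuclideanCLM (𝕜 := 𝕜) (1 - s • A)).toLinearMap
    (fun i => ((1 - s * hA.eigenvalues i : ℝ) : 𝕜))
    (fun i => ?_) hC (fun i => ?_) v
  · rw [RCLike.real_smul_eq_coe_smul (K := 𝕜) s A, map_sub, map_one, map_smul,
      ContinuousLinearMap.coe_coe, _root_.sub_apply, _root_.smul_apply, one_apply_eq_self,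
      hA.toEuclideanCLM_eigenvectorBasis, smul_smul]
    push_cast
    rw [sub_smul, one_smul]
  · simpa only [← RCLike.norm_ofReal (K := 𝕜)] using h i

end Matrix.IsHermitian

theorem stmt8_general {N : ℕ} (B : Matrix (Fin N) (Fin N) ℝ)
    (hB : B.IsHermitian)
    (δ : ℝ) (hδ1 : δ < 1)
    (μstar : ℝ) (hμstar : 0 < μstar)
    (μ γ : ℕ → ℝ)
    (hμ : ∀ n, 0 < μ n ∧ μ n ≤ μstar)
    (hμγ : ∀ n i, δ ≤ μ n * γ n * hB.eigenvalues i ∧ μ n * γ n * hB.eigenvalues i < 1)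
    (L : ℝ) (hL : 0 < L)
    (ε d : ℕ → EuclideanSpace ℝ (Fin N))
    (hd : ∀ n, ‖d n‖ ≤ L * ‖ε n‖)
    (hrec : ∀ n, ε (n + 1) =
      Matrix.toEuclideanCLM (𝕜 := ℝ) (n := Fin N) (1 - (μ n * γ n) • B) (ε n)
        + μ n • d n) :
    (∀ n, ‖ε n‖ ≤ (1 - δ + μstar * L) ^ n * ‖ε 0‖) ∧
    (1 - δ + μstar * L < 1 →
      Filter.Tendsto (fun n => ‖ε n‖) Filter.atTop (nhds 0)) := by
  set r := 1 - δ + μstar * L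
  have hr : 0 ≤ r := by positivity
  have step : ∀ n, ‖ε (n + 1)‖ ≤ r * ‖ε n‖ := fun n => calc
    ‖ε (n + 1)‖ ≤ ‖Matrix.toEuclideanCLM (𝕜 := ℝ) (1 - (μ n * γ n) • B) (ε n)‖ + ‖μ n • d n‖ :=
        hrec n ▸ norm_add_le _ _
    _ ≤ (1 - δ) * ‖ε n‖ + μstar * (L * ‖ε n‖) := by
        gcongr
        · refine hB.norm_toEuclideanCLM_one_sub_smul_le _ (by linarith) (fun i => ?_) _
          obtain ⟨hlow, hhigh⟩ := hμγ n i
          exact abs_le.2 ⟨by linarith, by linarith⟩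
        · rw [norm_smul, Real.norm_of_nonneg (hμ n).1.le]
          exact mul_le_mul (hμ n).2 (hd n) (norm_nonneg _) hμstar.le
    _ = r * ‖ε n‖ := by ring
  have bound : ∀ n, ‖ε n‖ ≤ r ^ n * ‖ε 0‖ := fun n => by
    simpa [mul_comm] using discrete_gronwall_prod_general (u := fun n => ‖ε n‖) (b := 0)
      (c := fun _ => r) (by simpa using fun n (_ : n ≥ 0) => step n) (fun _ _ => hr) (Nat.zero_le n)
  refine ⟨bound, fun hr1 => squeeze_zero (fun _ => norm_nonneg _) bound ?_⟩
  simpa using (tendsto_pow_atTop_nhds_zero_of_lt_one hr hr1).mul_const ‖ε 0‖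

/-- Discrete leader-following error dynamics.  `B` real symmetric with
eigenvalues `λᵢ`, `δ ∈ (0,1)`, `μ* > 0`, sequences `0 < μ_n ≤ μ*` and
`δ ≤ μ_n γ_n λᵢ < 1`, `𝓛 > 0`, and a sequence `ε` in `ℝ^N` with
`ε_{n+1} = (I - μ_n γ_n • B) ⬝ ε_n + μ_n • d_n` where `‖d_n‖ ≤ 𝓛 ‖ε_n‖`.
Then `‖ε_n‖ ≤ (1 - δ + μ* 𝓛)^n ‖ε_0‖`; in particular if `1 - δ + μ* 𝓛 < 1`
then `‖ε_n‖ → 0`. -/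
theorem stmt8 {N : ℕ} (hN : 0 < N) (B : Matrix (Fin N) (Fin N) ℝ)
    (hB : B.IsHermitian)
    (δ : ℝ) (hδ0 : 0 < δ) (hδ1 : δ < 1)
    (μstar : ℝ) (hμstar : 0 < μstar)
    (μ γ : ℕ → ℝ)
    (hμ : ∀ n, 0 < μ n ∧ μ n ≤ μstar)
    (hμγ : ∀ n i, δ ≤ μ n * γ n * hB.eigenvalues i ∧ μ n * γ n * hB.eigenvalues i < 1)
    (L : ℝ) (hL : 0 < L)
    (ε d : ℕ → EuclideanSpace ℝ (Fin N))
    (hd : ∀ n, ‖d n‖ ≤ L * ‖ε n‖)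
    (hrec : ∀ n, ε (n + 1) =
      Matrix.toEuclideanCLM (𝕜 := ℝ) (n := Fin N) (1 - (μ n * γ n) • B) (ε n)
        + μ n • d n) :
    (∀ n, ‖ε n‖ ≤ (1 - δ + μstar * L) ^ n * ‖ε 0‖) ∧
    (1 - δ + μstar * L < 1 →
      Filter.Tendsto (fun n => ‖ε n‖) Filter.atTop (nhds 0)) :=
  stmt8_general B hB δ hδ1 μstar hμstar μ γ hμ hμγ L hL ε d hd hrec
end

section
/- Consider the hybrid setup, with λ_min > 0 and M := max(1−δ, e^{−λ_min}) ∈ (0,1). Then for every n ≥ 0 and every t ∈ [a_n, b_n], ‖ε_n(t)‖ ≤ ‖ε_0(a_0)‖ · exp(𝓛·M^{−1}·(∑_{j=0}^{n−1}(b_j−a_j) + (t−a_n))) · M^{∑_{j=0}^{n−1}∫_{a_j}^{b_j} γ(s) ds + ∫_{a_n}^{t} γ(s) ds} · (M + μ*·𝓛)^n. -/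
/-!
On each interval `[a_j, b_j]` the energy `‖ε_j‖²` satisfies
`(‖ε_j‖²)' ≤ 2 (𝓛 - λ_min γ) ‖ε_j‖²` (Rayleigh quotient bound plus Cauchy–Schwarz), so
`‖ε_j(t)‖ ≤ ‖ε_j(a_j)‖ exp(𝓛 (t - a_j) - λ_min ∫ γ)`, and `e^{-λ_min} ≤ M ≤ 1` turns this into
`exp(𝓛 M⁻¹ (t - a_j)) M^{∫ γ}`. At a jump, `I - μ_j γ_j B` acts on the eigenbasis of `B` by the
factors `1 - μ_j γ_j λ_i ∈ (0, 1 - δ] ⊆ [-M, M]`, so the jump multiplies the norm by at most `M + μ* 𝓛`.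
Chaining the two estimates along the intervals gives the bound.
-/

open scoped RealInnerProductSpace
open Set

theorem norm_le_mul_exp_of_inner_le {E : Type*} [NormedAddCommGroup E] [InnerProductSpace ℝ E]
    {f f' : ℝ → E} {K κ : ℝ → ℝ} {a b : ℝ}
    (hf : ∀ t ∈ Icc a b, HasDerivAt f (f' t) t) (hK : ∀ t ∈ Icc a b, HasDerivAt K (κ t) t)
    (hκ : ∀ t ∈ Icc a b, ⟪f t, f' t⟫ ≤ κ t * ‖f t‖ ^ 2) :
    ∀ t ∈ Icc a b, ‖f t‖ ≤ ‖f a‖ * Real.exp (K t - K a) := by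
  intro t ht
  set ψ : ℝ → ℝ := fun u => ‖f u‖ ^ 2 * Real.exp (-(2 * K u))
  have hψ : ∀ u ∈ Icc a b, HasDerivAt ψ
      (2 * ⟪f u, f' u⟫ * Real.exp (-(2 * K u))
        + ‖f u‖ ^ 2 * (Real.exp (-(2 * K u)) * -(2 * κ u))) u := fun u hu =>
    (hf u hu).norm_sq.mul ((hK u hu).const_mul 2).neg.exp
  have hanti : AntitoneOn ψ (Icc a b) := by
    refine antitoneOn_of_hasDerivWithinAt_nonpos (convex_Icc a b)
      (fun u hu => (hψ u hu).continuousAt.continuousWithinAt)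
      (fun u hu => (hψ u (interior_subset hu)).hasDerivWithinAt) fun u hu => ?_
    have hu := interior_subset hu
    nlinarith [hκ u hu, Real.exp_pos (-(2 * K u))]
  have hle : ψ t ≤ ψ a := hanti ⟨le_rfl, ht.1.trans ht.2⟩ ht ht.1
  have hexp : Real.exp (-(2 * K a)) = Real.exp (K t - K a) ^ 2 * Real.exp (-(2 * K t)) := by
    rw [← Real.exp_nat_mul, ← Real.exp_add]; ring_nf
  refine (sq_le_sq₀ (norm_nonneg _) (by positivity)).mp
    (le_of_mul_le_mul_right ?_ (Real.exp_pos (-(2 * K t))))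
  simpa only [ψ, hexp, mul_pow, mul_assoc] using hle

namespace Matrix.IsHermitian

variable {n : Type*} [Fintype n] [DecidableEq n] {A : Matrix n n ℝ} (hA : A.IsHermitian)
include hA

theorem repr_toEuclideanCLM_apply (x : EuclideanSpace ℝ n) (i : n) :
    hA.eigenvectorBasis.repr (toEuclideanCLM (𝕜 := ℝ) A x) i
      = hA.eigenvalues i * hA.eigenvectorBasis.repr x i := by
  have hAv : toEuclideanCLM (𝕜 := ℝ) A (hA.eigenvectorBasis i)
      = hA.eigenvalues i • hA.eigenvectorBasis i :=
    congrArg (WithLp.toLp 2) (hA.mulVec_eigenvectorBasis i)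
  have hsymm : ⟪hA.eigenvectorBasis i, toEuclideanCLM (𝕜 := ℝ) A x⟫
      = ⟪toEuclideanCLM (𝕜 := ℝ) A (hA.eigenvectorBasis i), x⟫ :=
    (isSymmetric_toEuclideanLin_iff.mpr hA _ _).symm
  rw [OrthonormalBasis.repr_apply_apply, OrthonormalBasis.repr_apply_apply, hsymm, hAv,
    real_inner_smul_left]

theorem inner_toEuclideanCLM_self (x : EuclideanSpace ℝ n) :
    ⟪x, toEuclideanCLM (𝕜 := ℝ) A x⟫
      = ∑ i, hA.eigenvalues i * hA.eigenvectorBasis.repr x i ^ 2 := by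
  rw [← hA.eigenvectorBasis.repr.inner_map_map, PiLp.inner_apply]
  refine Finset.sum_congr rfl fun i _ => ?_
  rw [repr_toEuclideanCLM_apply]
  simp only [RCLike.inner_apply, conj_trivial]
  ring

theorem mul_norm_sq_le_inner_toEuclideanCLM_self {l : ℝ} (hl : ∀ i, l ≤ hA.eigenvalues i)
    (x : EuclideanSpace ℝ n) : l * ‖x‖ ^ 2 ≤ ⟪x, toEuclideanCLM (𝕜 := ℝ) A x⟫ := by
  rw [hA.inner_toEuclideanCLM_self, ← hA.eigenvectorBasis.repr.norm_map,
    EuclideanSpace.real_norm_sq_eq, Finset.mul_sum]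
  gcongr with i
  exact hl i

theorem norm_toEuclideanCLM_one_sub_smul_le_s11 {c r : ℝ} (hr : 0 ≤ r)
    (hc : ∀ i, |1 - c * hA.eigenvalues i| ≤ r) (x : EuclideanSpace ℝ n) :
    ‖toEuclideanCLM (𝕜 := ℝ) (1 - c • A) x‖ ≤ r * ‖x‖ := by
  rw [← hA.eigenvectorBasis.repr.norm_map, ← hA.eigenvectorBasis.repr.norm_map x,
    ← sq_le_sq₀ (norm_nonneg _) (by positivity), mul_pow,
    EuclideanSpace.real_norm_sq_eq, EuclideanSpace.real_norm_sq_eq, Finset.mul_sum]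
  gcongr with i
  have hrepr : hA.eigenvectorBasis.repr (toEuclideanCLM (𝕜 := ℝ) (1 - c • A) x) i
      = (1 - c * hA.eigenvalues i) * hA.eigenvectorBasis.repr x i := by
    have hmap : toEuclideanCLM (𝕜 := ℝ) (1 - c • A) x = x - c • toEuclideanCLM (𝕜 := ℝ) A x := by
      simp
    rw [hmap, map_sub, map_smul, PiLp.sub_apply, PiLp.smul_apply, smul_eq_mul,
      hA.repr_toEuclideanCLM_apply]
    ring
  rw [hrepr, mul_pow]
  gcongr ?_ * _
  exact sq_le_sq' (abs_le.mp (hc i)).1 (abs_le.mp (hc i)).2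

theorem norm_toEuclideanCLM_one_sub_smul_add_smul_le {c r μ μ' L : ℝ} (hr : 0 ≤ r)
    (hc : ∀ i, |1 - c * hA.eigenvalues i| ≤ r) (hμ : 0 ≤ μ) (hμμ' : μ ≤ μ')
    {x h : EuclideanSpace ℝ n} (hh : ‖h‖ ≤ L * ‖x‖) :
    ‖toEuclideanCLM (𝕜 := ℝ) (1 - c • A) x + μ • h‖ ≤ (r + μ' * L) * ‖x‖ :=
  calc ‖toEuclideanCLM (𝕜 := ℝ) (1 - c • A) x + μ • h‖
      ≤ ‖toEuclideanCLM (𝕜 := ℝ) (1 - c • A) x‖ + μ * ‖h‖ := by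
        grw [norm_add_le, norm_smul, Real.norm_of_nonneg hμ]
    _ ≤ r * ‖x‖ + μ' * (L * ‖x‖) := by
        gcongr
        · exact hA.norm_toEuclideanCLM_one_sub_smul_le_s11 hr hc x
        · exact hμ.trans hμμ'
    _ = (r + μ' * L) * ‖x‖ := by ring

theorem norm_le_mul_exp_of_hasDerivAt {l L : ℝ} (hl : ∀ i, l ≤ hA.eigenvalues i)
    {γ : ℝ → ℝ} (hγc : Continuous γ) (hγ0 : ∀ t, 0 ≤ γ t) {f g : ℝ → EuclideanSpace ℝ n}
    {a b : ℝ} (hf : ∀ t ∈ Icc a b, HasDerivAt f (-(γ t) • toEuclideanCLM (𝕜 := ℝ) A (f t) + g t) t)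
    (hg : ∀ t ∈ Icc a b, ‖g t‖ ≤ L * ‖f t‖) :
    ∀ t ∈ Icc a b, ‖f t‖ ≤ ‖f a‖ * Real.exp (L * (t - a) - l * ∫ s in a..t, γ s) := by
  have hK : ∀ t ∈ Icc a b, HasDerivAt (fun u => L * u - l * ∫ s in a..u, γ s)
      (L - l * γ t) t := fun t _ => by
    have hdiff := ((hasDerivAt_id' t).const_mul L).sub
      ((hγc.integral_hasStrictDerivAt a t).hasDerivAt.const_mul l)
    rw [mul_one] at hdiff
    exact hdiff
  intro t ht
  convert norm_le_mul_exp_of_inner_le hf hK (fun u hu => ?_) t ht using 3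
  · simp only [intervalIntegral.integral_same]
    ring
  rw [inner_add_right, real_inner_smul_right]
  nlinarith [hA.mul_norm_sq_le_inner_toEuclideanCLM_self hl (f u), hγ0 u,
    (real_inner_le_norm (f u) (g u)).trans (mul_le_mul_of_nonneg_left (hg u hu) (norm_nonneg _))]

end Matrix.IsHermitian

theorem exp_sub_mul_le_exp_mul_rpow {l L M τ X : ℝ} (hlM : Real.exp (-l) ≤ M) (hM1 : M ≤ 1)
    (hL : 0 ≤ L) (hτ : 0 ≤ τ) (hX : 0 ≤ X) :
    Real.exp (L * τ - l * X) ≤ Real.exp (L * M⁻¹ * τ) * M ^ X := by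
  have hM0 : 0 < M := (Real.exp_pos _).trans_le hlM
  rw [sub_eq_add_neg, Real.exp_add, neg_mul_eq_neg_mul, Real.exp_mul (-l)]
  gcongr
  exact le_mul_of_one_le_right hL (one_le_inv₀ hM0 |>.mpr hM1)

theorem le_mul_prod_mul_pow_of_le_mul {u v F : ℕ → ℝ} {q : ℝ} (hq : 0 ≤ q) (hF : ∀ n, 0 ≤ F n)
    (hflow : ∀ n, v n ≤ u n * F n) (hjump : ∀ n, u (n + 1) ≤ q * v n) (n : ℕ) :
    u n ≤ u 0 * (∏ j ∈ Finset.range n, F j) * q ^ n := by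
  induction n with
  | zero => simp
  | succ n ih =>
    calc u (n + 1) ≤ q * (u n * F n) := (hjump n).trans (by gcongr; exact hflow n)
      _ ≤ q * (u 0 * (∏ j ∈ Finset.range n, F j) * q ^ n * F n) := by
        gcongr
        exact hF n
      _ = u 0 * (∏ j ∈ Finset.range (n + 1), F j) * q ^ (n + 1) := by
        rw [Finset.prod_range_succ, pow_succ]
        ring

theorem stmt11_general {N : ℕ} (B : Matrix (Fin N) (Fin N) ℝ)
    (hB : B.IsHermitian) (lmin : ℝ)
    (hmin_le : ∀ i, lmin ≤ hB.eigenvalues i)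
    (hlmin_pos : 0 < lmin)
    (a b : ℕ → ℝ) (hab : ∀ j, a j ≤ b j) (hba : ∀ j, b j < a (j + 1))
    (μ : ℕ → ℝ) (hμdef : ∀ j, μ j = a (j + 1) - b j)
    (μstar : ℝ) (hμle : ∀ j, μ j ≤ μstar)
    (γ : ℝ → ℝ) (hγc : Continuous γ) (hγ0 : ∀ t, 0 ≤ γ t)
    (δ : ℝ) (hδ0 : 0 < δ)
    (L : ℝ) (hL : 0 < L)
    (γd : ℕ → ℝ)
    (hγd : ∀ j i, δ ≤ μ j * γd j * hB.eigenvalues i ∧ μ j * γd j * hB.eigenvalues i < 1)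
    (ε g : ℕ → ℝ → EuclideanSpace ℝ (Fin N))
    (hode : ∀ j, ∀ t ∈ Set.Icc (a j) (b j),
      HasDerivAt (ε j)
        (-(γ t) • (Matrix.toEuclideanCLM (𝕜 := ℝ) (n := Fin N) B (ε j t)) + g j t) t)
    (hg : ∀ j, ∀ t ∈ Set.Icc (a j) (b j), ‖g j t‖ ≤ L * ‖ε j t‖)
    (h : ℕ → EuclideanSpace ℝ (Fin N))
    (hjump : ∀ j, ε (j + 1) (a (j + 1)) =
      Matrix.toEuclideanCLM (𝕜 := ℝ) (n := Fin N) (1 - (μ j * γd j) • B) (ε j (b j))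
        + μ j • h j)
    (hh : ∀ j, ‖h j‖ ≤ L * ‖ε j (b j)‖)
    (M : ℝ) (hM : M = max (1 - δ) (Real.exp (-lmin))) :
    ∀ n, ∀ t ∈ Set.Icc (a n) (b n),
      ‖ε n t‖ ≤ ‖ε 0 (a 0)‖
        * Real.exp (L * M⁻¹ * ((∑ j ∈ Finset.range n, (b j - a j)) + (t - a n)))
        * M ^ ((∑ j ∈ Finset.range n, ∫ s in (a j)..(b j), γ s) + ∫ s in (a n)..t, γ s)
        * (M + μstar * L) ^ n := by
  have hμ : ∀ j, 0 < μ j := fun j => by linarith [hμdef j, hba j]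
  have hexpM : Real.exp (-lmin) ≤ M := hM ▸ le_max_right _ _
  have hM0 : 0 < M := (Real.exp_pos _).trans_le hexpM
  have hM1 : M ≤ 1 := hM ▸ max_le (by linarith) (Real.exp_le_one_iff.mpr (by linarith))
  have hq : 0 ≤ M + μstar * L := by nlinarith [hμ 0, hμle 0]
  set Φ : ℕ → ℝ → ℝ := fun j t => Real.exp (L * M⁻¹ * (t - a j)) * M ^ ∫ s in (a j)..t, γ s
  have hflow : ∀ j, ∀ t ∈ Icc (a j) (b j), ‖ε j t‖ ≤ ‖ε j (a j)‖ * Φ j t := fun j t ht =>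
    (hB.norm_le_mul_exp_of_hasDerivAt hmin_le hγc hγ0 (hode j) (hg j) t ht).trans <|
      mul_le_mul_of_nonneg_left (exp_sub_mul_le_exp_mul_rpow hexpM hM1 hL.le
        (sub_nonneg.mpr ht.1) (intervalIntegral.integral_nonneg ht.1 fun s _ => hγ0 s))
        (norm_nonneg _)
  have hcontract : ∀ j i, |1 - μ j * γd j * hB.eigenvalues i| ≤ M := fun j i =>
    abs_le.mpr ⟨by linarith [hγd j i], by linarith [hγd j i, hM ▸ le_max_left (1 - δ) _]⟩
  have hstep : ∀ j, ‖ε (j + 1) (a (j + 1))‖ ≤ (M + μstar * L) * ‖ε j (b j)‖ := fun j =>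
    hjump j ▸ hB.norm_toEuclideanCLM_one_sub_smul_add_smul_le hM0.le (hcontract j) (hμ j).le
      (hμle j) (hh j)
  intro n t ht
  have hstart := le_mul_prod_mul_pow_of_le_mul (u := fun j => ‖ε j (a j)‖) hq
    (fun j => by positivity) (fun j => hflow j (b j) ⟨hab j, le_rfl⟩) hstep n
  calc ‖ε n t‖ ≤ ‖ε n (a n)‖ * Φ n t := hflow n t ht
    _ ≤ ‖ε 0 (a 0)‖ * (∏ j ∈ Finset.range n, Φ j (b j)) * (M + μstar * L) ^ n * Φ n t := by
      gcongr
    _ = _ := by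
      simp only [Φ, Finset.prod_mul_distrib, ← Real.exp_sum, ← Real.rpow_sum_of_pos hM0,
        ← Finset.mul_sum]
      rw [Real.rpow_add hM0, mul_add, Real.exp_add]
      ring

/-- hybrid setup.  `B` real symmetric with eigenvalues `λᵢ`, smallest one
`λmin > 0`; intervals `[a_j, b_j]` with gaps `μ_j = a_{j+1} - b_j ∈ (0, μ*]`;
`γ : ℝ → ℝ` continuous nonnegative; `δ ∈ (0,1)`, `𝓛 > 0`; discrete gains `γd_j` with
`δ ≤ μ_j γd_j λᵢ < 1`.  Hybrid solution: on each `[a_j, b_j]`,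
`ε_j'(t) = -γ(t) • (B ⬝ ε_j(t)) + g_j(t)` with `‖g_j(t)‖ ≤ 𝓛 ‖ε_j(t)‖`, and at jumps
`ε_{j+1}(a_{j+1}) = (I - μ_j γd_j • B) ⬝ ε_j(b_j) + μ_j • h_j` with `‖h_j‖ ≤ 𝓛 ‖ε_j(b_j)‖`.
With `M = max (1-δ) e^{-λmin} ∈ (0,1)`, for every `n` and `t ∈ [a_n, b_n]`:
`‖ε_n(t)‖ ≤ ‖ε_0(a_0)‖ · exp(𝓛 M⁻¹ (∑_{j<n} (b_j - a_j) + (t - a_n)))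
  · M ^ (∑_{j<n} ∫_{a_j}^{b_j} γ + ∫_{a_n}^t γ) · (M + μ* 𝓛)^n`. -/
theorem stmt11 {N : ℕ} (hN : 0 < N) (B : Matrix (Fin N) (Fin N) ℝ)
    (hB : B.IsHermitian) (lmin : ℝ)
    (hmin_le : ∀ i, lmin ≤ hB.eigenvalues i)
    (hmin_mem : ∃ i, hB.eigenvalues i = lmin)
    (hlmin_pos : 0 < lmin)
    (a b : ℕ → ℝ) (hab : ∀ j, a j ≤ b j) (hba : ∀ j, b j < a (j + 1))
    (μ : ℕ → ℝ) (hμdef : ∀ j, μ j = a (j + 1) - b j)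
    (μstar : ℝ) (hμstar : 0 < μstar) (hμle : ∀ j, μ j ≤ μstar)
    (γ : ℝ → ℝ) (hγc : Continuous γ) (hγ0 : ∀ t, 0 ≤ γ t)
    (δ : ℝ) (hδ0 : 0 < δ) (hδ1 : δ < 1)
    (L : ℝ) (hL : 0 < L)
    (γd : ℕ → ℝ)
    (hγd : ∀ j i, δ ≤ μ j * γd j * hB.eigenvalues i ∧ μ j * γd j * hB.eigenvalues i < 1)
    (ε g : ℕ → ℝ → EuclideanSpace ℝ (Fin N))
    (hode : ∀ j, ∀ t ∈ Set.Icc (a j) (b j),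
      HasDerivAt (ε j)
        (-(γ t) • (Matrix.toEuclideanCLM (𝕜 := ℝ) (n := Fin N) B (ε j t)) + g j t) t)
    (hg : ∀ j, ∀ t ∈ Set.Icc (a j) (b j), ‖g j t‖ ≤ L * ‖ε j t‖)
    (h : ℕ → EuclideanSpace ℝ (Fin N))
    (hjump : ∀ j, ε (j + 1) (a (j + 1)) =
      Matrix.toEuclideanCLM (𝕜 := ℝ) (n := Fin N) (1 - (μ j * γd j) • B) (ε j (b j))
        + μ j • h j)
    (hh : ∀ j, ‖h j‖ ≤ L * ‖ε j (b j)‖)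
    (M : ℝ) (hM : M = max (1 - δ) (Real.exp (-lmin))) :
    ∀ n, ∀ t ∈ Set.Icc (a n) (b n),
      ‖ε n t‖ ≤ ‖ε 0 (a 0)‖
        * Real.exp (L * M⁻¹ * ((∑ j ∈ Finset.range n, (b j - a j)) + (t - a n)))
        * M ^ ((∑ j ∈ Finset.range n, ∫ s in (a j)..(b j), γ s) + ∫ s in (a n)..t, γ s)
        * (M + μstar * L) ^ n :=
  stmt11_general B hB lmin hmin_le hlmin_pos a b hab hba μ hμdef μstar hμle γ hγc hγ0 δ hδ0 L hL γd
    hγd ε g hode hg h hjump hh M hM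
end

section
/- Consider the hybrid setup, with λ_min > 0 and M := max(1−δ, e^{−λ_min}) ∈ (0,1). Assume M + μ*·𝓛 < 1 and that S := ∑_{j=0}^{∞}(b_j − a_j) is finite. Then for all n ≥ 0 and all t ∈ [a_n, b_n], ‖ε_n(t)‖ ≤ ‖ε_0(a_0)‖·e^{𝓛·M^{−1}·S}·(M + μ*·𝓛)^n, and consequently sup_{t ∈ [a_n,b_n]} ‖ε_n(t)‖ → 0 as n → ∞. -/
open scoped RealInnerProductSpace Matrix
open Set

private lemma clm_apply_eq' {N : ℕ} (A : Matrix (Fin N) (Fin N) ℝ) (x : EuclideanSpace ℝ (Fin N)) :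
    (Matrix.toEuclideanCLM (𝕜 := ℝ) (n := Fin N) A x : Fin N → ℝ) = A *ᵥ x :=
  rfl

private lemma inner_eigen' {N : ℕ} (B : Matrix (Fin N) (Fin N) ℝ) (hB : B.IsHermitian)
    (x : EuclideanSpace ℝ (Fin N)) (i : Fin N) :
    ⟪hB.eigenvectorBasis i, Matrix.toEuclideanCLM (𝕜 := ℝ) (n := Fin N) B x⟫ =
      hB.eigenvalues i * ⟪hB.eigenvectorBasis i, x⟫ := by
  have h1 : ∀ (u v : EuclideanSpace ℝ (Fin N)), ⟪u, v⟫ = (u : Fin N → ℝ) ⬝ᵥ v := by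
    intro u v
    simp [PiLp.inner_apply, dotProduct, mul_comm]
  rw [h1, h1, clm_apply_eq', Matrix.dotProduct_mulVec, ← Matrix.mulVec_transpose]
  have h3 : Bᵀ = B := by
    have := hB.eq
    rwa [Matrix.conjTranspose_eq_transpose_of_trivial] at this
  have h4 : B *ᵥ (hB.eigenvectorBasis i : Fin N → ℝ) =
      hB.eigenvalues i • (hB.eigenvectorBasis i : Fin N → ℝ) := hB.mulVec_eigenvectorBasis i
  rw [h3, h4, smul_dotProduct]
  rw [smul_eq_mul]

private lemma parseval' {N : ℕ} (bb : OrthonormalBasis (Fin N) ℝ (EuclideanSpace ℝ (Fin N)))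
    (x : EuclideanSpace ℝ (Fin N)) : ∑ i, ⟪bb i, x⟫ ^ 2 = ‖x‖ ^ 2 := by
  have := bb.sum_inner_mul_inner x x
  rw [real_inner_self_eq_norm_sq] at this
  rw [← this]
  refine Finset.sum_congr rfl fun i _ => ?_
  rw [real_inner_comm x (bb i), sq]

private lemma quad_nonneg' {N : ℕ} (B : Matrix (Fin N) (Fin N) ℝ) (hB : B.IsHermitian)
    (hev : ∀ i, 0 ≤ hB.eigenvalues i) (x : EuclideanSpace ℝ (Fin N)) :
    0 ≤ ⟪x, Matrix.toEuclideanCLM (𝕜 := ℝ) (n := Fin N) B x⟫ := by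
  rw [← hB.eigenvectorBasis.sum_inner_mul_inner]
  refine Finset.sum_nonneg fun i _ => ?_
  rw [inner_eigen']
  have : ⟪x, hB.eigenvectorBasis i⟫ * (hB.eigenvalues i * ⟪hB.eigenvectorBasis i, x⟫)
      = hB.eigenvalues i * (⟪hB.eigenvectorBasis i, x⟫ * ⟪x, hB.eigenvectorBasis i⟫) := by ring
  rw [this, real_inner_comm x]
  exact mul_nonneg (hev i) (mul_self_nonneg _)

private lemma jump_op_bound' {N : ℕ} (B : Matrix (Fin N) (Fin N) ℝ) (hB : B.IsHermitian)
    (c M' : ℝ) (hM' : 0 ≤ M') (hev : ∀ i, |1 - c * hB.eigenvalues i| ≤ M')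
    (v : EuclideanSpace ℝ (Fin N)) :
    ‖Matrix.toEuclideanCLM (𝕜 := ℝ) (n := Fin N) (1 - c • B) v‖ ≤ M' * ‖v‖ := by
  set A := Matrix.toEuclideanCLM (𝕜 := ℝ) (n := Fin N) (1 - c • B) v with hA
  have happ : A = v - c • (Matrix.toEuclideanCLM (𝕜 := ℝ) (n := Fin N) B v) := by
    rw [hA, map_sub, map_one, map_smul]
    simp
  have hsq : ‖A‖ ^ 2 ≤ (M' * ‖v‖) ^ 2 := by
    rw [← parseval' hB.eigenvectorBasis A]
    have hterm : ∀ i, ⟪hB.eigenvectorBasis i, A⟫ ^ 2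
        ≤ M' ^ 2 * ⟪hB.eigenvectorBasis i, v⟫ ^ 2 := by
      intro i
      rw [happ, inner_sub_right, inner_smul_right, inner_eigen']
      have h1 : ⟪hB.eigenvectorBasis i, v⟫ - c * (hB.eigenvalues i * ⟪hB.eigenvectorBasis i, v⟫)
          = (1 - c * hB.eigenvalues i) * ⟪hB.eigenvectorBasis i, v⟫ := by ring
      rw [h1, mul_pow]
      have h2 : (1 - c * hB.eigenvalues i) ^ 2 ≤ M' ^ 2 := by
        rw [← sq_abs]
        exact pow_le_pow_left₀ (abs_nonneg _) (hev i) 2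
      exact mul_le_mul_of_nonneg_right h2 (sq_nonneg _)
    calc ∑ i, ⟪hB.eigenvectorBasis i, A⟫ ^ 2
        ≤ ∑ i, M' ^ 2 * ⟪hB.eigenvectorBasis i, v⟫ ^ 2 := Finset.sum_le_sum fun i _ => hterm i
      _ = M' ^ 2 * ∑ i, ⟪hB.eigenvectorBasis i, v⟫ ^ 2 := by rw [Finset.mul_sum]
      _ = (M' * ‖v‖) ^ 2 := by rw [parseval', mul_pow]
  have h := Real.sqrt_le_sqrt hsq
  rwa [Real.sqrt_sq (norm_nonneg _), Real.sqrt_sq (mul_nonneg hM' (norm_nonneg _))] at h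

private lemma flow_bound' {N : ℕ} (B : Matrix (Fin N) (Fin N) ℝ) (hB : B.IsHermitian)
    (hev : ∀ i, 0 ≤ hB.eigenvalues i)
    (γ : ℝ → ℝ) (hγ0 : ∀ t, 0 ≤ γ t) (L : ℝ) (hL : 0 ≤ L)
    (p q : ℝ) (f g : ℝ → EuclideanSpace ℝ (Fin N))
    (hode : ∀ t ∈ Icc p q,
      HasDerivAt f (-(γ t) • (Matrix.toEuclideanCLM (𝕜 := ℝ) (n := Fin N) B (f t)) + g t) t)
    (hg : ∀ t ∈ Icc p q, ‖g t‖ ≤ L * ‖f t‖) :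
    ∀ t ∈ Icc p q, ‖f t‖ ≤ ‖f p‖ * Real.exp (L * (t - p)) := by
  set v : ℝ → EuclideanSpace ℝ (Fin N) :=
    fun t => -(γ t) • (Matrix.toEuclideanCLM (𝕜 := ℝ) (n := Fin N) B (f t)) + g t with hv
  set φ : ℝ → ℝ := fun t => ⟪f t, f t⟫ with hφdef
  set D : ℝ → ℝ := fun t => ⟪f t, v t⟫ + ⟪v t, f t⟫ with hD
  have hφ : ∀ t ∈ Icc p q, HasDerivAt φ (D t) t := fun t ht =>
    HasDerivAt.inner ℝ (hode t ht) (hode t ht)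
  have hφc : ContinuousOn φ (Icc p q) := fun t ht => ((hφ t ht).continuousAt).continuousWithinAt
  have key : ∀ t ∈ Icc p q, φ t ≤ gronwallBound (φ p) (2 * L) 0 (t - p) := by
    apply le_gronwallBound_of_liminf_deriv_right_le hφc
    · intro x hx r hr
      exact ((hφ x (mem_Icc_of_Ico hx)).hasDerivWithinAt).liminf_right_slope_le hr
    · exact le_refl _
    · intro x hx
      have hx' := mem_Icc_of_Ico hx
      have h1 : D x ≤ 2 * L * φ x + 0 := by
        have e1 : D x = 2 * ⟪f x, v x⟫ := by
          rw [hD]; dsimp only; rw [real_inner_comm (v x) (f x)]; ring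
        rw [e1, add_zero]
        have e2 : ⟪f x, v x⟫ = -(γ x) * ⟪f x, Matrix.toEuclideanCLM (𝕜 := ℝ) (n := Fin N) B (f x)⟫
            + ⟪f x, g x⟫ := by
          rw [hv]; dsimp only; rw [inner_add_right, inner_smul_right]
        have e3 : ⟪f x, g x⟫ ≤ L * ‖f x‖ ^ 2 := by
          calc ⟪f x, g x⟫ ≤ ‖f x‖ * ‖g x‖ := real_inner_le_norm _ _
            _ ≤ ‖f x‖ * (L * ‖f x‖) :=
              mul_le_mul_of_nonneg_left (hg x hx') (norm_nonneg _)
            _ = L * ‖f x‖ ^ 2 := by ring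
        have e4 : 0 ≤ ⟪f x, Matrix.toEuclideanCLM (𝕜 := ℝ) (n := Fin N) B (f x)⟫ :=
          quad_nonneg' B hB hev (f x)
        have e5 : φ x = ‖f x‖ ^ 2 := real_inner_self_eq_norm_sq _
        nlinarith [mul_nonneg (hγ0 x) e4]
      exact h1
  intro t ht
  have h2 := key t ht
  rw [gronwallBound_ε0] at h2
  have e5 : φ t = ‖f t‖ ^ 2 := real_inner_self_eq_norm_sq _
  have e6 : φ p = ‖f p‖ ^ 2 := real_inner_self_eq_norm_sq _
  rw [e5, e6] at h2
  have h3 : ‖f t‖ ^ 2 ≤ (‖f p‖ * Real.exp (L * (t - p))) ^ 2 := by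
    rw [mul_pow, ← Real.exp_nat_mul]
    calc ‖f t‖ ^ 2 ≤ ‖f p‖ ^ 2 * Real.exp (2 * L * (t - p)) := h2
      _ = ‖f p‖ ^ 2 * Real.exp ((2 : ℕ) * (L * (t - p))) := by ring_nf
  have h4 := Real.sqrt_le_sqrt h3
  rwa [Real.sqrt_sq (norm_nonneg _),
    Real.sqrt_sq (mul_nonneg (norm_nonneg _) (Real.exp_pos _).le)] at h4

/-- hybrid setup (see statement 11) with `λmin > 0`,
`M = max (1-δ) e^{-λmin} ∈ (0,1)`, `M + μ* 𝓛 < 1`, and `S := ∑_{j=0}^∞ (b_j - a_j)`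
finite.  Then `‖ε_n(t)‖ ≤ ‖ε_0(a_0)‖ e^{𝓛 M⁻¹ S} (M + μ* 𝓛)^n` for all `n` and
`t ∈ [a_n, b_n]`, and consequently `sup_{t ∈ [a_n, b_n]} ‖ε_n(t)‖ → 0` as `n → ∞`. -/
theorem stmt13 {N : ℕ} (hN : 0 < N) (B : Matrix (Fin N) (Fin N) ℝ)
    (hB : B.IsHermitian) (lmin : ℝ)
    (hmin_le : ∀ i, lmin ≤ hB.eigenvalues i)
    (hmin_mem : ∃ i, hB.eigenvalues i = lmin)
    (hlmin_pos : 0 < lmin)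
    (a b : ℕ → ℝ) (hab : ∀ j, a j ≤ b j) (hba : ∀ j, b j < a (j + 1))
    (μ : ℕ → ℝ) (hμdef : ∀ j, μ j = a (j + 1) - b j)
    (μstar : ℝ) (hμstar : 0 < μstar) (hμle : ∀ j, μ j ≤ μstar)
    (γ : ℝ → ℝ) (hγc : Continuous γ) (hγ0 : ∀ t, 0 ≤ γ t)
    (δ : ℝ) (hδ0 : 0 < δ) (hδ1 : δ < 1)
    (L : ℝ) (hL : 0 < L)
    (γd : ℕ → ℝ)
    (hγd : ∀ j i, δ ≤ μ j * γd j * hB.eigenvalues i ∧ μ j * γd j * hB.eigenvalues i < 1)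
    (ε g : ℕ → ℝ → EuclideanSpace ℝ (Fin N))
    (hode : ∀ j, ∀ t ∈ Set.Icc (a j) (b j),
      HasDerivAt (ε j)
        (-(γ t) • (Matrix.toEuclideanCLM (𝕜 := ℝ) (n := Fin N) B (ε j t)) + g j t) t)
    (hg : ∀ j, ∀ t ∈ Set.Icc (a j) (b j), ‖g j t‖ ≤ L * ‖ε j t‖)
    (h : ℕ → EuclideanSpace ℝ (Fin N))
    (hjump : ∀ j, ε (j + 1) (a (j + 1)) =
      Matrix.toEuclideanCLM (𝕜 := ℝ) (n := Fin N) (1 - (μ j * γd j) • B) (ε j (b j))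
        + μ j • h j)
    (hh : ∀ j, ‖h j‖ ≤ L * ‖ε j (b j)‖)
    (M : ℝ) (hM : M = max (1 - δ) (Real.exp (-lmin)))
    (hM1 : M + μstar * L < 1)
    (hsum : Summable (fun j => b j - a j))
    (S : ℝ) (hS : S = ∑' j, (b j - a j)) :
    (∀ n, ∀ t ∈ Set.Icc (a n) (b n),
      ‖ε n t‖ ≤ ‖ε 0 (a 0)‖ * Real.exp (L * M⁻¹ * S) * (M + μstar * L) ^ n) ∧
    Filter.Tendsto (fun n => ⨆ t ∈ Set.Icc (a n) (b n), ‖ε n t‖)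
      Filter.atTop (nhds 0) := by
  have hM0 : 0 < M := by
    rw [hM]; exact lt_of_lt_of_le (Real.exp_pos _) (le_max_right _ _)
  have hMlt1 : M < 1 := by
    rw [hM]
    exact max_lt (by linarith) (Real.exp_lt_one_iff.mpr (by linarith))
  set R : ℝ := M + μstar * L with hR
  have hR0 : 0 < R := by positivity
  have hev0 : ∀ i, 0 ≤ hB.eigenvalues i := fun i => le_trans hlmin_pos.le (hmin_le i)
  have hμpos : ∀ j, 0 < μ j := fun j => by rw [hμdef]; linarith [hba j]
  have seg : ∀ j, ∀ t ∈ Set.Icc (a j) (b j),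
      ‖ε j t‖ ≤ ‖ε j (a j)‖ * Real.exp (L * (t - a j)) := fun j =>
    flow_bound' B hB hev0 γ hγ0 L hL.le (a j) (b j) (ε j) (g j) (hode j) (hg j)
  have jmp : ∀ j, ‖ε (j + 1) (a (j + 1))‖ ≤ R * ‖ε j (b j)‖ := by
    intro j
    rw [hjump j]
    have hev' : ∀ i, |1 - (μ j * γd j) * hB.eigenvalues i| ≤ M := by
      intro i
      obtain ⟨h1, h2⟩ := hγd j i
      rw [abs_of_nonneg (by linarith)]
      exact le_trans (by linarith) (hM ▸ le_max_left _ _)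
    calc ‖Matrix.toEuclideanCLM (𝕜 := ℝ) (n := Fin N) (1 - (μ j * γd j) • B) (ε j (b j))
          + μ j • h j‖
        ≤ ‖Matrix.toEuclideanCLM (𝕜 := ℝ) (n := Fin N) (1 - (μ j * γd j) • B) (ε j (b j))‖
          + ‖μ j • h j‖ := norm_add_le _ _
      _ ≤ M * ‖ε j (b j)‖ + μstar * (L * ‖ε j (b j)‖) := by
          refine add_le_add (jump_op_bound' B hB _ M hM0.le hev' _) ?_
          rw [norm_smul, Real.norm_eq_abs, abs_of_pos (hμpos j)]
          exact mul_le_mul (hμle j) (hh j) (norm_nonneg _) hμstar.le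
      _ = R * ‖ε j (b j)‖ := by rw [hR]; ring
  set K0 : ℝ := ‖ε 0 (a 0)‖ with hK0
  have main : ∀ n, ‖ε n (a n)‖ ≤
      K0 * Real.exp (L * ∑ j ∈ Finset.range n, (b j - a j)) * R ^ n := by
    intro n
    induction n with
    | zero => simp [hK0]
    | succ n ih =>
      calc ‖ε (n + 1) (a (n + 1))‖ ≤ R * ‖ε n (b n)‖ := jmp n
        _ ≤ R * (‖ε n (a n)‖ * Real.exp (L * (b n - a n))) := by
            have := seg n (b n) ⟨hab n, le_refl _⟩
            exact mul_le_mul_of_nonneg_left this hR0.le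
        _ ≤ R * ((K0 * Real.exp (L * ∑ j ∈ Finset.range n, (b j - a j)) * R ^ n)
              * Real.exp (L * (b n - a n))) := by
            have := mul_le_mul_of_nonneg_right ih (Real.exp_pos (L * (b n - a n))).le
            exact mul_le_mul_of_nonneg_left this hR0.le
        _ = K0 * Real.exp (L * ∑ j ∈ Finset.range (n + 1), (b j - a j)) * R ^ (n + 1) := by
            rw [Finset.sum_range_succ, mul_add, Real.exp_add]
            ring
  have hS0 : 0 ≤ S := by
    rw [hS]
    exact tsum_nonneg fun j => sub_nonneg.mpr (hab j)
  have hMinv : (1 : ℝ) ≤ M⁻¹ := (one_le_inv₀ hM0).mpr hMlt1.le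
  have bound : ∀ n, ∀ t ∈ Set.Icc (a n) (b n),
      ‖ε n t‖ ≤ K0 * Real.exp (L * M⁻¹ * S) * R ^ n := by
    intro n t ht
    have hsum_le : ∑ j ∈ Finset.range (n + 1), (b j - a j) ≤ S := by
      rw [hS]
      exact Summable.sum_le_tsum (Finset.range (n + 1)) (fun j _ => sub_nonneg.mpr (hab j)) hsum
    calc ‖ε n t‖ ≤ ‖ε n (a n)‖ * Real.exp (L * (t - a n)) := seg n t ht
      _ ≤ (K0 * Real.exp (L * ∑ j ∈ Finset.range n, (b j - a j)) * R ^ n)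
            * Real.exp (L * (b n - a n)) := by
          refine mul_le_mul (main n) (Real.exp_le_exp.mpr ?_) (Real.exp_pos _).le ?_
          · exact mul_le_mul_of_nonneg_left (by linarith [ht.2]) hL.le
          · positivity
      _ = K0 * Real.exp (L * ∑ j ∈ Finset.range (n + 1), (b j - a j)) * R ^ n := by
          rw [Finset.sum_range_succ, mul_add, Real.exp_add]
          ring
      _ ≤ K0 * Real.exp (L * M⁻¹ * S) * R ^ n := by
          refine mul_le_mul_of_nonneg_right (mul_le_mul_of_nonneg_left
            (Real.exp_le_exp.mpr ?_) (norm_nonneg _)) (by positivity)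
          calc L * ∑ j ∈ Finset.range (n + 1), (b j - a j) ≤ L * S :=
                mul_le_mul_of_nonneg_left hsum_le hL.le
            _ ≤ L * (M⁻¹ * S) :=
                mul_le_mul_of_nonneg_left (le_mul_of_one_le_left hS0 hMinv) hL.le
            _ = L * M⁻¹ * S := by ring
  refine ⟨bound, ?_⟩
  have hC0 : 0 ≤ K0 * Real.exp (L * M⁻¹ * S) := by positivity
  have h0 : ∀ n, 0 ≤ ⨆ t ∈ Set.Icc (a n) (b n), ‖ε n t‖ := fun n =>
    Real.iSup_nonneg fun t => Real.iSup_nonneg fun _ => norm_nonneg _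
  have hub : ∀ n, (⨆ t ∈ Set.Icc (a n) (b n), ‖ε n t‖)
      ≤ (K0 * Real.exp (L * M⁻¹ * S)) * R ^ n := by
    intro n
    have hc : 0 ≤ (K0 * Real.exp (L * M⁻¹ * S)) * R ^ n := by positivity
    refine Real.iSup_le (fun t => Real.iSup_le (fun ht => ?_) hc) hc
    have := bound n t ht
    linarith [this]
  have hTR : Filter.Tendsto (fun n : ℕ => (K0 * Real.exp (L * M⁻¹ * S)) * R ^ n)
      Filter.atTop (nhds 0) := by
    have := (tendsto_pow_atTop_nhds_zero_of_lt_one hR0.le hM1).const_mul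
      (K0 * Real.exp (L * M⁻¹ * S))
    simpa using this
  exact squeeze_zero h0 hub hTR
end
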